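/- Let g(λ, B) = λ²B²/(λ² + (1+λ)²) and let Q_{1−α}(γ) denote the (1−α)th quantile of the noncentral chi-square distribution with 1 degree of freedom and noncentrality γ. Then for every λ ≥ 0, α ∈ (0,1), and B > 0, L₂(λ) = (2/(1+2λ))·√(Q_{1−α}(g(λ,B))·(λ² + (1+λ)²)) ≤ L₁(λ) = (2/(1+2λ))·[λB + z_{1−α/2}·√(λ² + (1+λ)²)], where z_{1−α/2}² = Q_{1−α}(0). -/
import Mathlib


open MeasureTheory

/-- The standard normal CDF. -/
noncomputable def stdNormalCDF (x : ℝ) : ℝ :=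
  ∫ t in Set.Iic x, (Real.sqrt (2 * Real.pi))⁻¹ * Real.exp (-t ^ 2 / 2)

lemma stdNormal_integrable :
    Integrable (fun t : ℝ => (Real.sqrt (2 * Real.pi))⁻¹ * Real.exp (-t ^ 2 / 2)) := by
  apply Integrable.const_mul
  have h : (fun t : ℝ => Real.exp (-t ^ 2 / 2)) = fun t => Real.exp (-(1/2 : ℝ) * t ^ 2) := by
    ext t; ring_nf
  rw [h]
  exact integrable_exp_neg_mul_sq (by norm_num)

lemma stdNormalCDF_strictMono : StrictMono stdNormalCDF := by
  intro x y hxy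
  have hint := stdNormal_integrable
  have hsplit : stdNormalCDF y = stdNormalCDF x +
      ∫ t in Set.Ioc x y, (Real.sqrt (2 * Real.pi))⁻¹ * Real.exp (-t ^ 2 / 2) := by
    unfold stdNormalCDF
    rw [← MeasureTheory.setIntegral_union (Set.Iic_disjoint_Ioc le_rfl) measurableSet_Ioc
      hint.integrableOn hint.integrableOn, Set.Iic_union_Ioc_eq_Iic hxy.le]
  have hpos : 0 < ∫ t in Set.Ioc x y, (Real.sqrt (2 * Real.pi))⁻¹ * Real.exp (-t ^ 2 / 2) := by
    rw [← intervalIntegral.integral_of_le hxy.le]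
    apply intervalIntegral.intervalIntegral_pos_of_pos_on
    · exact hint.intervalIntegrable
    · intro t _
      positivity
    · exact hxy
  linarith

/-- Proposition 2: L₂(λ; α, B) ≤ L₁(λ; α, B) for every λ ≥ 0, α ∈ (0,1), B > 0.
Here Q(γ) = Q_{1−α}(γ) is the (1−α)th quantile of χ²(1, γ), characterized by
Φ(√(Q γ) − √γ) − Φ(−√(Q γ) − √γ) = 1 − α with Q γ > 0, g(λ,B) = λ²B²/(λ²+(1+λ)²),
and z_{1−α/2} = √(Q 0). -/
theorem stmt_13 (α B : ℝ) (hα : 0 < α) (hα1 : α < 1) (hB : 0 < B)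
    (Q : ℝ → ℝ) (hQpos : ∀ γ, 0 ≤ γ → 0 < Q γ)
    (hQ : ∀ γ, 0 ≤ γ →
      stdNormalCDF (Real.sqrt (Q γ) - Real.sqrt γ) -
        stdNormalCDF (-Real.sqrt (Q γ) - Real.sqrt γ) = 1 - α)
    (g : ℝ → ℝ) (hg : ∀ lam, g lam = lam ^ 2 * B ^ 2 / (lam ^ 2 + (1 + lam) ^ 2))
    (L₁ L₂ : ℝ → ℝ)
    (hL₁ : ∀ lam, L₁ lam =
      2 / (1 + 2 * lam) *
        (lam * B + Real.sqrt (Q 0) * Real.sqrt (lam ^ 2 + (1 + lam) ^ 2)))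
    (hL₂ : ∀ lam, L₂ lam =
      2 / (1 + 2 * lam) * Real.sqrt (Q (g lam) * (lam ^ 2 + (1 + lam) ^ 2))) :
    ∀ lam, 0 ≤ lam → L₂ lam ≤ L₁ lam := by
  -- Key inequality: √(Q γ) ≤ √(Q 0) + √γ for all γ ≥ 0
  have key : ∀ γ : ℝ, 0 ≤ γ → Real.sqrt (Q γ) ≤ Real.sqrt (Q 0) + Real.sqrt γ := by
    intro γ hγ
    by_contra hcon
    push_neg at hcon
    have hsγ : (0:ℝ) ≤ Real.sqrt γ := Real.sqrt_nonneg γ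
    have h0 := hQ 0 le_rfl
    have hγQ := hQ γ hγ
    rw [Real.sqrt_zero, sub_zero, sub_zero] at h0
    have h1 : Real.sqrt (Q 0) < Real.sqrt (Q γ) - Real.sqrt γ := by linarith
    have h2 : -Real.sqrt (Q γ) - Real.sqrt γ < -Real.sqrt (Q 0) := by linarith
    have := stdNormalCDF_strictMono h1
    have := stdNormalCDF_strictMono h2
    linarith
  intro lam hlam
  set S : ℝ := lam ^ 2 + (1 + lam) ^ 2 with hS
  have hSpos : 0 < S := by positivity
  have hgpos : 0 ≤ g lam := by rw [hg]; positivity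
  have hc : (0:ℝ) ≤ 2 / (1 + 2 * lam) := by positivity
  rw [hL₁, hL₂]
  apply mul_le_mul_of_nonneg_left _ hc
  have hQg : 0 ≤ Q (g lam) := (hQpos _ hgpos).le
  rw [Real.sqrt_mul hQg]
  have hsS : (0:ℝ) < Real.sqrt S := Real.sqrt_pos.mpr hSpos
  have hsg : Real.sqrt (g lam) * Real.sqrt S = lam * B := by
    have hgv : Real.sqrt (g lam) = lam * B / Real.sqrt S := by
      rw [hg, Real.sqrt_div (by positivity)]
      congr 1
      rw [show lam ^ 2 * B ^ 2 = (lam * B) ^ 2 by ring, Real.sqrt_sq (by positivity)]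
    rw [hgv, div_mul_cancel₀ _ hsS.ne']
  calc Real.sqrt (Q (g lam)) * Real.sqrt S
      ≤ (Real.sqrt (Q 0) + Real.sqrt (g lam)) * Real.sqrt S :=
        mul_le_mul_of_nonneg_right (key _ hgpos) hsS.le
    _ = lam * B + Real.sqrt (Q 0) * Real.sqrt S := by rw [add_mul, hsg]; ring
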